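/- For every n ≥ 1, the group W_n = ⟨T_n⟩ contains the copy RiSt_F(C_{(ρ_n,1)} ∪ C_{(ρ_n,2)} ∪ C_{(ρ_n,3)} ∪ C_{(ρ_n,4)}) of Thompson's group F supported on the union of the four copies of the Cantor set above ρ_n. -/

import Mathlib

noncomputable section

/-! ### Generalities: the group of self-homeomorphisms -/

instance homeoGroup {X : Type*} [TopologicalSpace X] : Group (X ≃ₜ X) where
  mul f g := g.trans f
  one := Homeomorph.refl X
  inv := Homeomorph.symm
  mul_assoc a b c := Homeomorph.ext fun _ => rfl
  one_mul a := Homeomorph.ext fun _ => rfl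
  mul_one a := Homeomorph.ext fun _ => rfl
  inv_mul_cancel a := Homeomorph.ext a.symm_apply_apply

/-! ### Homeomorphisms of a product with a discrete factor -/

theorem cont_fibered {X Y Z : Type*} [TopologicalSpace X] [TopologicalSpace Y]
    [DiscreteTopology Y] [TopologicalSpace Z] (f : X → Y → Z) (hf : ∀ y, Continuous (f · y)) :
    Continuous (fun p : X × Y => f p.1 p.2) := by
  rw [continuous_iff_continuousAt]
  rintro ⟨x, y⟩
  have hmem : {p : X × Y | p.2 = y} ∈ nhds (x, y) := by
    have ho : IsOpen {p : X × Y | p.2 = y} := by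
      have h : ({p : X × Y | p.2 = y}) = Prod.snd ⁻¹' {y} := rfl
      rw [h]; exact (isOpen_discrete _).preimage continuous_snd
    exact ho.mem_nhds rfl
  refine ContinuousAt.congr (((hf y).comp continuous_fst).continuousAt) ?_
  filter_upwards [hmem] with p hp
  simp [hp]

/-- The homeomorphism of `X × Y`, `Y` discrete, acting on each fiber `X × {y}`
by the homeomorphism `F y`. -/
def fiberedHomeo {X Y : Type*} [TopologicalSpace X] [TopologicalSpace Y] [DiscreteTopology Y]
    (F : Y → X ≃ₜ X) : (X × Y) ≃ₜ (X × Y) where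
  toEquiv := Equiv.prodCongrLeft fun y => (F y).toEquiv
  continuous_toFun := by
    refine Continuous.prodMk ?_ continuous_snd
    exact cont_fibered (fun x y => F y x) (fun y => (F y).continuous)
  continuous_invFun := by
    refine Continuous.prodMk ?_ continuous_snd
    exact cont_fibered (fun x y => (F y).symm x) (fun y => (F y).symm.continuous)

/-- The homeomorphism of `X × Y`, `Y` discrete, permuting the fibers according to a
permutation of `Y` and acting trivially in the `X`-coordinate. -/
def basePermHomeo {X Y : Type*} [TopologicalSpace X] [TopologicalSpace Y] [DiscreteTopology Y]
    (e : Equiv.Perm Y) : (X × Y) ≃ₜ (X × Y) where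
  toEquiv := Equiv.prodCongr (Equiv.refl X) e
  continuous_toFun :=
    continuous_fst.prodMk (continuous_of_discreteTopology.comp continuous_snd)
  continuous_invFun :=
    continuous_fst.prodMk (continuous_of_discreteTopology.comp continuous_snd)

/-! ### The Cantor set -/

/-- The Cantor set `{0,1}^ℕ`. -/
abbrev Cantor : Type := ℕ → Bool

/-- Prepending a finite word to an element of the Cantor set. -/
def wordAppend (w : List Bool) (ξ : Cantor) : Cantor :=
  fun n => if h : n < w.length then w[n] else ξ (n - w.length)

/-- A dyadic partition set: a finite set of binary words whose cylinders partition
the Cantor set. -/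
def IsDyadicPartition (A : Finset (List Bool)) : Prop :=
  ∀ ξ : Cantor, ∃! w : List Bool, w ∈ A ∧ ∃ ξ' : Cantor, wordAppend w ξ' = ξ

/-- The defining condition for elements of Thompson's group `V`: a homeomorphism of the
Cantor set given by prefix replacement along a bijection of two dyadic partition sets. -/
def IsThompsonVMap (γ : Cantor ≃ₜ Cantor) : Prop :=
  ∃ (A B : Finset (List Bool)) (f : List Bool → List Bool),
    IsDyadicPartition A ∧ IsDyadicPartition B ∧ A.card = B.card ∧ Set.BijOn f A B ∧
    ∀ w ∈ A, ∀ ξ : Cantor, γ (wordAppend w ξ) = wordAppend (f w) ξ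

/-- Thompson's group `V`, as a group of homeomorphisms of the Cantor set. -/
def ThompsonV : Subgroup (Cantor ≃ₜ Cantor) :=
  Subgroup.closure {γ | IsThompsonVMap γ}

theorem cantor_core_continuous (G : ℕ → Bool → Bool → Bool → Bool → Bool → Bool → Bool) :
    Continuous (fun ξ : Cantor =>
      (fun n => G n (ξ 0) (ξ 1) (ξ 2) (ξ (n - 1)) (ξ n) (ξ (n + 1)) : Cantor)) := by
  apply continuous_pi
  intro n
  have h : Continuous (fun ξ : Cantor =>
      ((ξ 0, ξ 1, ξ 2, ξ (n - 1), ξ n, ξ (n + 1)) : Bool × Bool × Bool × Bool × Bool × Bool)) :=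
    (continuous_apply 0).prodMk ((continuous_apply 1).prodMk
      ((continuous_apply 2).prodMk ((continuous_apply (n-1)).prodMk
      ((continuous_apply n).prodMk (continuous_apply (n+1))))))
  exact (continuous_of_discreteTopology
    (f := fun p : Bool × Bool × Bool × Bool × Bool × Bool =>
      G n p.1 p.2.1 p.2.2.1 p.2.2.2.1 p.2.2.2.2.1 p.2.2.2.2.2)).comp h

def consC (b : Bool) (ξ : Cantor) : Cantor := fun n => match n with
  | 0 => b
  | n+1 => ξ n

def shiftC (ξ : Cantor) : Cantor := fun n => ξ (n + 1)

theorem consC_continuous (b : Bool) : Continuous (consC b) := by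
  apply continuous_pi
  intro n
  match n with
  | 0 => exact continuous_const
  | n+1 => exact continuous_apply n

theorem shiftC_continuous : Continuous shiftC :=
  continuous_pi fun n => continuous_apply (n + 1)

/-! ### Thompson's generator `X₀` as a homeomorphism of the Cantor set -/

def x0core (n : ℕ) (b0 b1 : Bool) (w v u : Bool) : Bool :=
  if b0 = false then
    (if b1 = false then u
     else if n = 0 then true else if n = 1 then false else v)
  else (if n ≤ 1 then true else w)

def x0invcore (n : ℕ) (b0 b1 : Bool) (w v u : Bool) : Bool :=
  if b0 = false then (if n ≤ 1 then false else w)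
  else if b1 = false then (if n = 0 then false else if n = 1 then true else v)
  else (if n = 0 then true else u)

/-- `X₀ : 00ξ ↦ 0ξ`, `01ξ ↦ 10ξ`, `1ξ ↦ 11ξ`. -/
def x0fun (ξ : Cantor) : Cantor := fun n => x0core n (ξ 0) (ξ 1) (ξ (n - 1)) (ξ n) (ξ (n + 1))

def x0inv (ξ : Cantor) : Cantor := fun n => x0invcore n (ξ 0) (ξ 1) (ξ (n - 1)) (ξ n) (ξ (n + 1))

theorem x0_left_inv : Function.LeftInverse x0inv x0fun := by
  intro ξ
  funext n
  rcases hb0 : ξ 0 with _ | _ <;> rcases hb1 : ξ 1 with _ | _ <;>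
    rcases n with _ | _ | n <;>
    simp [x0fun, x0inv, x0core, x0invcore, hb0, hb1]

theorem x0_right_inv : Function.RightInverse x0inv x0fun := by
  intro ξ
  funext n
  rcases hb0 : ξ 0 with _ | _ <;> rcases hb1 : ξ 1 with _ | _ <;>
    rcases n with _ | _ | n <;>
    simp [x0fun, x0inv, x0core, x0invcore, hb0, hb1]

/-- Thompson's generator `X₀` as a homeomorphism of the Cantor set. -/
def X0c : Cantor ≃ₜ Cantor where
  toEquiv := ⟨x0fun, x0inv, x0_left_inv, x0_right_inv⟩
  continuous_toFun := cantor_core_continuous fun n b0 b1 _ w v u => x0core n b0 b1 w v u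
  continuous_invFun := cantor_core_continuous fun n b0 b1 _ w v u => x0invcore n b0 b1 w v u

/-- The homeomorphism `Cantor ≃ₜ Cantor × Bool` splitting off the first letter. -/
def splitHomeo : Cantor ≃ₜ Cantor × Bool where
  toEquiv := ⟨fun ξ => (shiftC ξ, ξ 0), fun p => consC p.2 p.1,
    fun ξ => by funext n; rcases n with _ | n <;> rfl,
    fun p => by
      refine Prod.ext ?_ rfl
      funext n; rfl⟩
  continuous_toFun := shiftC_continuous.prodMk (continuous_apply 0)
  continuous_invFun := by
    apply continuous_pi
    intro n
    match n with
    | 0 => exact continuous_snd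
    | n+1 => exact (continuous_apply n).comp continuous_fst

/-- Thompson's generator `X₁ = 1X₀`: the copy of `X₀` supported on the cylinder `1C`. -/
def X1c : Cantor ≃ₜ Cantor :=
  splitHomeo.trans ((fiberedHomeo fun b =>
    if b = true then X0c else Homeomorph.refl Cantor).trans splitHomeo.symm)

end

noncomputable section

/-! ### The Grigorchuk generators -/

namespace Grig

def aFun : List Bool → List Bool
  | [] => []
  | x :: w => (!x) :: w

mutual
  def bFun : List Bool → List Bool
    | [] => []
    | false :: w => false :: aFun w
    | true :: w => true :: cFun w
  def cFun : List Bool → List Bool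
    | [] => []
    | false :: w => false :: aFun w
    | true :: w => true :: dFun w
  def dFun : List Bool → List Bool
    | [] => []
    | false :: w => false :: w
    | true :: w => true :: bFun w
end

theorem aFun_involutive : Function.Involutive aFun := by
  intro w
  match w with
  | [] => rfl
  | x :: w => simp [aFun]

theorem bcd_involutive :
    ∀ w : List Bool, bFun (bFun w) = w ∧ cFun (cFun w) = w ∧ dFun (dFun w) = w := by
  intro w
  induction w with
  | nil => exact ⟨rfl, rfl, rfl⟩
  | cons x w ih =>
    rcases x with _ | _
    · simp [bFun, cFun, dFun, aFun_involutive w]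
    · simp [bFun, cFun, dFun, ih.1, ih.2.1, ih.2.2]

theorem bFun_involutive : Function.Involutive bFun := fun w => (bcd_involutive w).1
theorem cFun_involutive : Function.Involutive cFun := fun w => (bcd_involutive w).2.1
theorem dFun_involutive : Function.Involutive dFun := fun w => (bcd_involutive w).2.2

theorem aFun_length : ∀ w : List Bool, (aFun w).length = w.length := by
  intro w
  match w with
  | [] => rfl
  | x :: w => simp [aFun]

theorem bcd_length : ∀ w : List Bool,
    (bFun w).length = w.length ∧ (cFun w).length = w.length ∧ (dFun w).length = w.length := by
  intro w
  induction w with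
  | nil => exact ⟨rfl, rfl, rfl⟩
  | cons x w ih =>
    rcases x with _ | _
    · simp [bFun, cFun, dFun, aFun_length w]
    · simp [bFun, cFun, dFun, ih.1, ih.2.1, ih.2.2]

theorem bFun_length : ∀ w, (bFun w).length = w.length := fun w => (bcd_length w).1
theorem cFun_length : ∀ w, (cFun w).length = w.length := fun w => (bcd_length w).2.1
theorem dFun_length : ∀ w, (dFun w).length = w.length := fun w => (bcd_length w).2.2

/-- The generators of the first Grigorchuk group as permutations of the vertex set
`{0,1}*` of the rooted binary tree. -/
def aPerm : Equiv.Perm (List Bool) := aFun_involutive.toPerm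
def bPerm : Equiv.Perm (List Bool) := bFun_involutive.toPerm
def cPerm : Equiv.Perm (List Bool) := cFun_involutive.toPerm
def dPerm : Equiv.Perm (List Bool) := dFun_involutive.toPerm

/-- The generating set `S = {a, b, c, d}` (a set of involutions). -/
def Sset : Set (Equiv.Perm (List Bool)) := {aPerm, bPerm, cPerm, dPerm}

/-- The first Grigorchuk group. -/
def Grigorchuk : Subgroup (Equiv.Perm (List Bool)) := Subgroup.closure Sset

/-- Word length with respect to `S = {a, b, c, d}`. -/
def wordLength (g : Equiv.Perm (List Bool)) : ℕ :=
  sInf {k | ∃ l : List (Equiv.Perm (List Bool)),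
    (∀ x ∈ l, x ∈ Sset) ∧ l.length = k ∧ l.prod = g}

/-- The growth function of the first Grigorchuk group with respect to `S`. -/
def growthGrig (m : ℕ) : ℕ :=
  Nat.card {g : Equiv.Perm (List Bool) |
    ∃ l : List (Equiv.Perm (List Bool)), (∀ x ∈ l, x ∈ Sset) ∧ l.length ≤ m ∧ l.prod = g}

/-! ### Level transfer -/

def levelFun (n : ℕ) (f : List Bool → List Bool) (v : Fin n → Bool) : Fin n → Bool :=
  fun i => (f (List.ofFn v)).getD i false

theorem levelFun_involutive (n : ℕ) (f : List Bool → List Bool)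
    (hlen : ∀ l, (f l).length = l.length) (hinv : Function.Involutive f) :
    Function.Involutive (levelFun n f) := by
  intro v
  have key : ∀ u : Fin n → Bool, List.ofFn (levelFun n f u) = f (List.ofFn u) := by
    intro u
    apply List.ext_getElem
    · simp [hlen]
    · intro i h1 h2
      simp only [List.getElem_ofFn]
      simp [levelFun, List.getD_eq_getElem, h2]
  funext i
  simp only [levelFun, key v, hinv (List.ofFn v)]
  simp [List.getD_eq_getElem]

/-- The images `a_n, b_n, c_n, d_n` of the Grigorchuk generators in `Sym(X_n)`,
where the `n`-th level `X_n = {0,1}^n` is identified with `Fin n → Bool`. -/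
def aLev (n : ℕ) : Equiv.Perm (Fin n → Bool) :=
  (levelFun_involutive n aFun aFun_length aFun_involutive).toPerm
def bLev (n : ℕ) : Equiv.Perm (Fin n → Bool) :=
  (levelFun_involutive n bFun bFun_length bFun_involutive).toPerm
def cLev (n : ℕ) : Equiv.Perm (Fin n → Bool) :=
  (levelFun_involutive n cFun cFun_length cFun_involutive).toPerm
def dLev (n : ℕ) : Equiv.Perm (Fin n → Bool) :=
  (levelFun_involutive n dFun dFun_length dFun_involutive).toPerm

end Grig

/-! ### The space `C_{Y_n}` and the generating set `T_n` -/

namespace TV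

/-- The `n`-th level `X_n = {0,1}^n` of the binary tree. -/
abbrev XL (n : ℕ) : Type := Fin n → Bool

/-- `C_{Y_n} = C × Y_n` with `Y_n = X_n × {1,2,3,4}`; the sheets are indexed by `Fin 4`. -/
abbrev Mn (n : ℕ) : Type := Cantor × (XL n × Fin 4)

/-- `ρ_n = 1^n`. -/
def rhoL (n : ℕ) : XL n := fun _ => true
/-- `η_n = 1^{n-1}0`. -/
def etaL (n : ℕ) : XL n := fun i => decide ((i : ℕ) < n - 1)
/-- `θ_n = 01^{n-1}`. -/
def thetaL (n : ℕ) : XL n := fun i => decide (0 < (i : ℕ))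

/-- A type 1 generator: an element of `S_n` acting diagonally on the four sheets. -/
def type1Gen (n : ℕ) (s : Equiv.Perm (XL n)) : Mn n ≃ₜ Mn n :=
  basePermHomeo (s.prodCongr (Equiv.refl (Fin 4)))

/-- The set of type 1 generators (the truncated Grigorchuk generators). -/
def Type1Set (n : ℕ) : Set (Mn n ≃ₜ Mn n) :=
  {type1Gen n (Grig.aLev n), type1Gen n (Grig.bLev n),
   type1Gen n (Grig.cLev n), type1Gen n (Grig.dLev n)}

/-- A type 2 generator: an element of `Sym(4)_{η_n}`. -/
def type2Gen (n : ℕ) (π : Equiv.Perm (Fin 4)) : Mn n ≃ₜ Mn n :=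
  basePermHomeo (Equiv.prodCongrRight fun x : XL n =>
    if x = etaL n then π else Equiv.refl (Fin 4))

/-- The copy `Sym(4)_{η_n}` of the symmetric group over `η_n` (type 2 generators). -/
def Type2Set (n : ℕ) : Set (Mn n ≃ₜ Mn n) := Set.range (type2Gen n)

/-- The linking transposition `τ_n` (type 3), exchanging the first sheets over
`ρ_n` and `θ_n`. -/
def tauN (n : ℕ) : Mn n ≃ₜ Mn n :=
  basePermHomeo (Equiv.swap (rhoL n, (0 : Fin 4)) (thetaL n, (0 : Fin 4)))

/-- `X₁^{(n)}`: the copy of `X₀` supported on the fourth sheet over `ρ_n` (type 4). -/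
def X1n (n : ℕ) : Mn n ≃ₜ Mn n :=
  fiberedHomeo fun y : XL n × Fin 4 =>
    if y = (rhoL n, (3 : Fin 4)) then X0c else Homeomorph.refl Cantor

/-! The homeomorphism of `C × {1,2,3,4}` acting as `X₀` on `D = C_2 ⊔ C_3` (sheets `1`, `2`
in the `Fin 4` indexing) under the identification `(ξ, i) ↦ (i-2)ξ`, and trivial elsewhere. -/

def x0dSheet (i : Fin 4) (b0 : Bool) : Fin 4 :=
  if i = 1 then (if b0 = false then 1 else 2) else i

def x0dCore (i : Fin 4) (n : ℕ) (b0 w v u : Bool) : Bool :=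
  if i = 1 then (if b0 = false then u else if n = 0 then false else v)
  else if i = 2 then (if n = 0 then true else w)
  else v

def x0dSheetInv (i : Fin 4) (b0 : Bool) : Fin 4 :=
  if i = 2 then (if b0 = false then 1 else 2) else i

def x0dCoreInv (i : Fin 4) (n : ℕ) (b0 w v u : Bool) : Bool :=
  if i = 1 then (if n = 0 then false else w)
  else if i = 2 then (if b0 = false then (if n = 0 then true else v) else u)
  else v

def x0dFun (p : Cantor × Fin 4) : Cantor × Fin 4 :=
  ((fun n => x0dCore p.2 n (p.1 0) (p.1 (n - 1)) (p.1 n) (p.1 (n + 1))),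
    x0dSheet p.2 (p.1 0))

def x0dInvFun (p : Cantor × Fin 4) : Cantor × Fin 4 :=
  ((fun n => x0dCoreInv p.2 n (p.1 0) (p.1 (n - 1)) (p.1 n) (p.1 (n + 1))),
    x0dSheetInv p.2 (p.1 0))

theorem x0d_left_inv : Function.LeftInverse x0dInvFun x0dFun := by
  rintro ⟨ξ, i⟩
  rcases hb0 : ξ 0 with _ | _ <;> fin_cases i <;>
    refine Prod.ext (funext fun n => ?_) ?_ <;>
    first
      | (rcases n with _ | n <;>
          simp [x0dFun, x0dInvFun, x0dCore, x0dCoreInv, x0dSheet, x0dSheetInv, hb0])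
      | simp [x0dFun, x0dInvFun, x0dCore, x0dCoreInv, x0dSheet, x0dSheetInv, hb0]

theorem x0d_right_inv : Function.RightInverse x0dInvFun x0dFun := by
  rintro ⟨ξ, i⟩
  rcases hb0 : ξ 0 with _ | _ <;> fin_cases i <;>
    refine Prod.ext (funext fun n => ?_) ?_ <;>
    first
      | (rcases n with _ | n <;>
          simp [x0dFun, x0dInvFun, x0dCore, x0dCoreInv, x0dSheet, x0dSheetInv, hb0])
      | simp [x0dFun, x0dInvFun, x0dCore, x0dCoreInv, x0dSheet, x0dSheetInv, hb0]

theorem x0dFun_continuous : Continuous x0dFun := by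
  have h : Continuous fun p : Cantor × Fin 4 => x0dFun (p.1, p.2) := by
    refine cont_fibered (Z := Cantor × Fin 4) (fun ξ i => x0dFun (ξ, i)) fun i => ?_
    refine Continuous.prodMk ?_ ?_
    · exact cantor_core_continuous fun n b0 _ _ w v u => x0dCore i n b0 w v u
    · exact Continuous.comp
        (continuous_of_discreteTopology (α := Bool) (f := x0dSheet i)) (continuous_apply 0)
  simpa using h

theorem x0dInvFun_continuous : Continuous x0dInvFun := by
  have h : Continuous fun p : Cantor × Fin 4 => x0dInvFun (p.1, p.2) := by
    refine cont_fibered (Z := Cantor × Fin 4) (fun ξ i => x0dInvFun (ξ, i)) fun i => ?_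
    refine Continuous.prodMk ?_ ?_
    · exact cantor_core_continuous fun n b0 _ _ w v u => x0dCoreInv i n b0 w v u
    · exact Continuous.comp
        (continuous_of_discreteTopology (α := Bool) (f := x0dSheetInv i)) (continuous_apply 0)
  simpa using h

def X0D : (Cantor × Fin 4) ≃ₜ (Cantor × Fin 4) where
  toEquiv := ⟨x0dFun, x0dInvFun, x0d_left_inv, x0d_right_inv⟩
  continuous_toFun := x0dFun_continuous
  continuous_invFun := x0dInvFun_continuous

/-- Reshuffling `C × (X_n × {1,…,4}) ≃ₜ (C × {1,…,4}) × X_n`. -/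
def reshuffle (n : ℕ) : Mn n ≃ₜ (Cantor × Fin 4) × XL n :=
  ((Homeomorph.refl Cantor).prodCongr (Homeomorph.prodComm (XL n) (Fin 4))).trans
    (Homeomorph.prodAssoc Cantor (Fin 4) (XL n)).symm

/-- `X₀^{(n)}`: acting as `X₀` on `D_n = C_{(ρ_n,2)} ⊔ C_{(ρ_n,3)}` (type 4). -/
def X0n (n : ℕ) : Mn n ≃ₜ Mn n :=
  (reshuffle n).trans ((fiberedHomeo fun x : XL n =>
    if x = rhoL n then X0D else Homeomorph.refl (Cantor × Fin 4)).trans (reshuffle n).symm)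

/-- The type 4 generators. -/
def Type4Set (n : ℕ) : Set (Mn n ≃ₜ Mn n) := {X0n n, X1n n}

/-- The generating set `T_n`. -/
def TnSet (n : ℕ) : Set (Mn n ≃ₜ Mn n) :=
  Type1Set n ∪ Type2Set n ∪ {tauN n} ∪ Type4Set n

/-- The group `W_n = ⟨T_n⟩`. -/
def Wn (n : ℕ) : Subgroup (Mn n ≃ₜ Mn n) := Subgroup.closure (TnSet n)

/-- The generators of types `2`, `3` and `4`. -/
def typeSet (n : ℕ) : ℕ → Set (Mn n ≃ₜ Mn n)
  | 2 => Type2Set n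
  | 3 => {tauN n}
  | 4 => Type4Set n
  | _ => ∅

end TV

end
/-! ### The identification of the four sheets over `ρ_n` with the Cantor set -/

namespace TV

def quadIdx : Bool → Bool → Fin 4
  | false, false => 0
  | false, true => 1
  | true, false => 2
  | true, true => 3

def quadHi (i : Fin 4) : Bool := decide (2 ≤ (i : ℕ))
def quadLo (i : Fin 4) : Bool := decide ((i : ℕ) % 2 = 1)

/-- The identification of `C × {1,2,3,4}` with `C`, concatenating the four copies in the
order of the index. -/
def quadHomeo : (Cantor × Fin 4) ≃ₜ Cantor where
  toEquiv := ⟨fun p => consC (quadHi p.2) (consC (quadLo p.2) p.1),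
    fun ξ => (shiftC (shiftC ξ), quadIdx (ξ 0) (ξ 1)),
    by
      rintro ⟨ξ, i⟩
      refine Prod.ext (funext fun n => rfl) ?_
      fin_cases i <;> simp [quadHi, quadLo, quadIdx, consC, shiftC],
    by
      intro ξ
      rcases hb0 : ξ 0 with _ | _ <;> rcases hb1 : ξ 1 with _ | _ <;>
        funext n <;> rcases n with _ | _ | n <;>
        simp [consC, shiftC, quadIdx, quadHi, quadLo, hb0, hb1] <;> try decide⟩
  continuous_toFun := by
    have h : Continuous fun p : Cantor × Fin 4 =>
        (fun ξ i => consC (quadHi i) (consC (quadLo i) ξ)) p.1 p.2 :=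
      cont_fibered (Z := Cantor) _ fun i =>
        (consC_continuous (quadHi i)).comp (consC_continuous (quadLo i))
    exact h
  continuous_invFun := by
    refine Continuous.prodMk (shiftC_continuous.comp shiftC_continuous) ?_
    have h : Continuous (fun p : Bool × Bool => quadIdx p.1 p.2) :=
      continuous_of_discreteTopology
    have h2 : Continuous fun ξ : Cantor => (ξ 0, ξ 1) :=
      (continuous_apply 0).prodMk (continuous_apply 1)
    exact h.comp h2

/-- The copy of a homeomorphism `f` of the Cantor set supported on the union of the four
sheets over `ρ_n`, via the identification of this union with the Cantor set. -/
def liftRho (n : ℕ) (f : Cantor ≃ₜ Cantor) : Mn n ≃ₜ Mn n :=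
  (reshuffle n).trans ((fiberedHomeo fun x : XL n =>
    if x = rhoL n then quadHomeo.trans (f.trans quadHomeo.symm)
    else Homeomorph.refl (Cantor × Fin 4)).trans (reshuffle n).symm)

end TV

/-- Thompson's group `F` as a group of homeomorphisms of the Cantor set, generated by the
standard generators `X₀` and `X₁`. -/
def ThompsonF : Subgroup (Cantor ≃ₜ Cantor) := Subgroup.closure {X0c, X1c}

/-! A word `s` in `a_n, b_n, c_n, d_n` with `s η_n = ρ_n` exists: the sections of `aba`, `d`, `b`,
`c` at the vertex `1` are `a`, `b`, `c`, `d`, so a word moving `1^k 0` to `1^{k+1}` lifts to one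
moving `1^{k+1} 0` to `1^{k+2}`. Conjugating `Sym(4)_{η_n}` by `s` puts every permutation of the
four sheets over `ρ_n` into `W_n`.

Identify the sheets over `ρ_n` with the cylinders `00C, 01C, 10C, 11C`. Then `X₀^{(n)}` acts as
`X₀` on `01C ⊔ 10C`; conjugating it by the cyclic shift `r : i ↦ i + 1` of the sheets gives `X₀`
on `10C ⊔ 11C`, which is `X₁`, and conjugating by `r⁻¹` gives `X₀` on `00C ⊔ 01C`. Finally
`X₀ = X₁ · X₀^{(n)} · r⁻¹X₀^{(n)}r`, so both generators of `F` lie in `W_n`. -/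

namespace Homeomorph

variable {X Y : Type*} [TopologicalSpace X] [TopologicalSpace Y]

def conjHom (e : X ≃ₜ Y) : (X ≃ₜ X) →* (Y ≃ₜ Y) where
  toFun f := e.symm.trans (f.trans e)
  map_one' := Homeomorph.ext e.apply_symm_apply
  map_mul' f g := Homeomorph.ext fun y => by
    simp only [Homeomorph.trans_apply, Homeomorph.mul_apply, Homeomorph.symm_apply_apply]

@[simp]
theorem conjHom_apply (e : X ≃ₜ Y) (f : X ≃ₜ X) (y : Y) : conjHom e f y = e (f (e.symm y)) :=
  rfl

end Homeomorph

section DiscreteFactor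

variable {X Y : Type*} [TopologicalSpace X] [TopologicalSpace Y] [DiscreteTopology Y]

def fiberedHomeoHom : (Y → X ≃ₜ X) →* ((X × Y) ≃ₜ (X × Y)) where
  toFun := fiberedHomeo
  map_one' := rfl
  map_mul' _ _ := rfl

@[simp]
theorem basePermHomeo_apply (e : Equiv.Perm Y) (p : X × Y) :
    basePermHomeo e p = (p.1, e p.2) :=
  rfl

@[simp]
theorem basePermHomeo_symm_apply (e : Equiv.Perm Y) (p : X × Y) :
    (basePermHomeo e).symm p = (p.1, e.symm p.2) :=
  rfl

end DiscreteFactor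

namespace Grig

inductive Gen | a | b | c | d

namespace Gen

def tree : Gen → List Bool → List Bool
  | a => aFun
  | b => bFun
  | c => cFun
  | d => dFun

def level (n : ℕ) : Gen → Equiv.Perm (Fin n → Bool)
  | a => aLev n
  | b => bLev n
  | c => cLev n
  | d => dLev n

end Gen

def evalWord : List Gen → List Bool → List Bool
  | [], w => w
  | g :: l, w => g.tree (evalWord l w)

theorem evalWord_append (l₁ l₂ : List Gen) (w : List Bool) :
    evalWord (l₁ ++ l₂) w = evalWord l₁ (evalWord l₂ w) := by
  induction l₁ with
  | nil => rfl
  | cons g l ih => simp only [List.cons_append, evalWord, ih]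

theorem exists_word_section_true (g : Gen) :
    ∃ l : List Gen, ∀ w, evalWord l (true :: w) = true :: g.tree w := by
  cases g
  · exact ⟨[.a, .b, .a], fun w => rfl⟩
  · exact ⟨[.d], fun w => rfl⟩
  · exact ⟨[.b], fun w => rfl⟩
  · exact ⟨[.c], fun w => rfl⟩

theorem exists_word_lift (l : List Gen) :
    ∃ l' : List Gen, ∀ w, evalWord l' (true :: w) = true :: evalWord l w := by
  induction l with
  | nil => exact ⟨[], fun w => rfl⟩
  | cons g l ih =>
    obtain ⟨l', hl'⟩ := ih
    obtain ⟨m, hm⟩ := exists_word_section_true g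
    exact ⟨m ++ l', fun w => by rw [evalWord_append, hl', hm]; rfl⟩

theorem exists_word_replicate (k : ℕ) :
    ∃ l : List Gen, evalWord l (List.replicate k true ++ [false]) = List.replicate (k + 1) true := by
  induction k with
  | zero => exact ⟨[.a], rfl⟩
  | succ k ih =>
    obtain ⟨l, hl⟩ := ih
    obtain ⟨l', hl'⟩ := exists_word_lift l
    exact ⟨l', by rw [List.replicate_succ, List.cons_append, hl', hl, ← List.replicate_succ]⟩

theorem ofFn_levelFun {n : ℕ} {f : List Bool → List Bool} (hf : ∀ l, (f l).length = l.length)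
    (v : Fin n → Bool) : List.ofFn (levelFun n f v) = f (List.ofFn v) := by
  refine List.ext_getElem (by simp [hf]) fun i _ h => ?_
  simp [levelFun, h]

theorem ofFn_level (n : ℕ) (g : Gen) (v : Fin n → Bool) :
    List.ofFn (g.level n v) = g.tree (List.ofFn v) := by
  cases g
  · exact ofFn_levelFun aFun_length v
  · exact ofFn_levelFun bFun_length v
  · exact ofFn_levelFun cFun_length v
  · exact ofFn_levelFun dFun_length v

theorem ofFn_prod_level (n : ℕ) (l : List Gen) (v : Fin n → Bool) :
    List.ofFn ((l.map (Gen.level n)).prod v) = evalWord l (List.ofFn v) := by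
  induction l with
  | nil => rfl
  | cons g l ih =>
    rw [List.map_cons, List.prod_cons, Equiv.Perm.mul_apply, ofFn_level, ih]
    rfl

end Grig

namespace TV

open Homeomorph

theorem ofFn_etaL (n : ℕ) : List.ofFn (etaL (n + 1)) = List.replicate n true ++ [false] := by
  refine List.ext_getElem (by simp) fun i h _ => ?_
  rw [List.length_ofFn] at h
  rcases Nat.lt_succ_iff_lt_or_eq.1 h with hi | rfl
  · rw [List.getElem_append_left (by simpa using hi)]
    simp only [List.getElem_ofFn, etaL]
    simp [hi]
  · simp only [List.getElem_ofFn, etaL]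
    simp

theorem exists_word_etaL_eq_rhoL (n : ℕ) :
    ∃ l : List Grig.Gen, (l.map (Grig.Gen.level n)).prod (etaL n) = rhoL n := by
  cases n with
  | zero => exact ⟨[], Subsingleton.elim _ _⟩
  | succ n =>
    obtain ⟨l, hl⟩ := Grig.exists_word_replicate n
    refine ⟨l, List.ofFn_injective ?_⟩
    rw [Grig.ofFn_prod_level, ofFn_etaL, hl]
    exact (List.ofFn_const (n + 1) true).symm

def rhoSheets (n : ℕ) : ((Cantor × Fin 4) ≃ₜ (Cantor × Fin 4)) →* (Mn n ≃ₜ Mn n) :=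
  (conjHom (reshuffle n).symm).comp
    (fiberedHomeoHom.comp (MonoidHom.mulSingle (fun _ => _) (rhoL n)))

theorem rhoSheets_eq (n : ℕ) (q : (Cantor × Fin 4) ≃ₜ (Cantor × Fin 4)) :
    rhoSheets n q = (reshuffle n).trans ((fiberedHomeo fun x : XL n =>
      if x = rhoL n then q else Homeomorph.refl (Cantor × Fin 4)).trans (reshuffle n).symm) := by
  have h : Pi.mulSingle (rhoL n) q = fun x => if x = rhoL n then q else 1 :=
    funext fun x => Pi.mulSingle_apply _ _ _
  simp only [rhoSheets, MonoidHom.comp_apply, MonoidHom.mulSingle_apply, h]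
  rfl

theorem liftRho_eq (n : ℕ) (f : Cantor ≃ₜ Cantor) :
    liftRho n f = rhoSheets n (conjHom quadHomeo.symm f) :=
  (rhoSheets_eq n _).symm

theorem rhoSheets_apply (n : ℕ) (q : (Cantor × Fin 4) ≃ₜ (Cantor × Fin 4)) (ξ : Cantor) (x : XL n)
    (i : Fin 4) : rhoSheets n q (ξ, x, i) =
      if x = rhoL n then ((q (ξ, i)).1, x, (q (ξ, i)).2) else (ξ, x, i) := by
  rw [rhoSheets_eq]
  change (((if x = rhoL n then q else Homeomorph.refl _) (ξ, i)).1, x,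
    ((if x = rhoL n then q else Homeomorph.refl _) (ξ, i)).2) = _
  split_ifs <;> rfl

theorem type1Gen_mul_type2Gen_mul_inv {n : ℕ} {s : Equiv.Perm (XL n)} (hs : s (etaL n) = rhoL n)
    (π : Equiv.Perm (Fin 4)) :
    type1Gen n s * type2Gen n π * (type1Gen n s)⁻¹ = rhoSheets n (basePermHomeo π) := by
  ext ⟨ξ, x, i⟩ : 1
  have hη : s.symm x = etaL n ↔ x = rhoL n := by rw [← hs, Equiv.symm_apply_eq]
  simp only [mul_apply, inv_apply, rhoSheets_apply, type1Gen, type2Gen, basePermHomeo_apply,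
    basePermHomeo_symm_apply, Equiv.prodCongr_apply, Equiv.prodCongr_symm, Prod.map,
    Equiv.prodCongrRight_apply, hη, Equiv.apply_symm_apply]
  split_ifs <;> rfl

theorem type1Gen_prod_level_mem (n : ℕ) (l : List Grig.Gen) :
    type1Gen n (l.map (Grig.Gen.level n)).prod ∈ Wn n := by
  let type1Hom : Equiv.Perm (XL n) →* (Mn n ≃ₜ Mn n) :=
    { toFun := type1Gen n, map_one' := rfl, map_mul' := fun _ _ => rfl }
  change type1Hom _ ∈ _
  rw [map_list_prod, List.map_map]
  refine list_prod_mem fun _ hg => ?_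
  obtain ⟨g, -, rfl⟩ := List.mem_map.1 hg
  change type1Gen n (g.level n) ∈ Wn n
  refine Subgroup.subset_closure (Or.inl (Or.inl (Or.inl ?_)))
  cases g <;> simp [Type1Set, Grig.Gen.level]

theorem rhoSheets_basePermHomeo_mem (n : ℕ) (π : Equiv.Perm (Fin 4)) :
    rhoSheets n (basePermHomeo π) ∈ Wn n := by
  obtain ⟨l, hl⟩ := exists_word_etaL_eq_rhoL n
  rw [← type1Gen_mul_type2Gen_mul_inv hl]
  have hs := type1Gen_prod_level_mem n l
  exact mul_mem (mul_mem hs (Subgroup.subset_closure (Or.inl (Or.inl (Or.inr ⟨π, rfl⟩)))))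
    (inv_mem hs)

def quadGens : Set ((Cantor × Fin 4) ≃ₜ (Cantor × Fin 4)) :=
  insert X0D (Set.range basePermHomeo)

theorem map_closure_quadGens_le (n : ℕ) :
    (Subgroup.closure quadGens).map (rhoSheets n) ≤ Wn n := by
  rw [MonoidHom.map_closure, Subgroup.closure_le]
  rintro _ ⟨q, hq | ⟨π, rfl⟩, rfl⟩
  · rw [hq, rhoSheets_eq]
    exact Subgroup.subset_closure (Or.inr (Or.inl rfl))
  · exact rhoSheets_basePermHomeo_mem n π

theorem quadHomeo_apply (p : Cantor × Fin 4) :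
    quadHomeo p = consC (quadHi p.2) (consC (quadLo p.2) p.1) := rfl

theorem quadHomeo_symm_apply (ω : Cantor) :
    quadHomeo.symm ω = (shiftC (shiftC ω), quadIdx (ω 0) (ω 1)) := rfl

theorem X0c_apply (ζ : Cantor) : X0c ζ = x0fun ζ := rfl

theorem X1c_apply (ζ : Cantor) :
    X1c ζ = consC (ζ 0) ((if ζ 0 = true then X0c else Homeomorph.refl Cantor) (shiftC ζ)) := rfl

theorem X0D_apply (p : Cantor × Fin 4) : X0D p = x0dFun p := rfl

section QuadIdentities

attribute [local simp] quadHomeo_apply quadHomeo_symm_apply X0c_apply X1c_apply X0D_apply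
  finRotate_succ_apply x0fun x0core x0dFun x0dCore x0dSheet quadIdx quadHi quadLo consC shiftC

theorem conjHom_quadHomeo_X1c : conjHom quadHomeo.symm X1c =
    basePermHomeo (finRotate 4) * X0D * (basePermHomeo (finRotate 4))⁻¹ := by
  ext ⟨ξ, i⟩ : 1
  refine Prod.ext (funext fun m => ?_) ?_
  · rcases hb0 : ξ 0 with _ | _ <;> fin_cases i <;> rcases m with _ | _ | m <;> simp +decide [hb0]
  · rcases hb0 : ξ 0 with _ | _ <;> fin_cases i <;> simp +decide [hb0]

theorem conjHom_quadHomeo_X0c : conjHom quadHomeo.symm X0c = conjHom quadHomeo.symm X1c * X0D *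
    ((basePermHomeo (finRotate 4))⁻¹ * X0D * basePermHomeo (finRotate 4)) := by
  ext ⟨ξ, i⟩ : 1
  refine Prod.ext (funext fun m => ?_) ?_
  · rcases hb0 : ξ 0 with _ | _ <;> fin_cases i <;> rcases m with _ | _ | m <;> simp +decide [hb0]
  · rcases hb0 : ξ 0 with _ | _ <;> fin_cases i <;> simp +decide [hb0]

end QuadIdentities

theorem conjHom_quadHomeo_mem_closure_quadGens {f : Cantor ≃ₜ Cantor} (hf : f ∈ ThompsonF) :
    conjHom quadHomeo.symm f ∈ Subgroup.closure quadGens := by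
  have hX0D : X0D ∈ Subgroup.closure quadGens := Subgroup.subset_closure (Set.mem_insert _ _)
  have hσ : basePermHomeo (finRotate 4) ∈ Subgroup.closure quadGens :=
    Subgroup.subset_closure (Or.inr ⟨_, rfl⟩)
  have hX1c : conjHom quadHomeo.symm X1c ∈ Subgroup.closure quadGens := by
    rw [conjHom_quadHomeo_X1c]
    exact mul_mem (mul_mem hσ hX0D) (inv_mem hσ)
  suffices ThompsonF ≤ (Subgroup.closure quadGens).comap (conjHom quadHomeo.symm) from this hf
  rw [ThompsonF, Subgroup.closure_le]
  rintro _ (rfl | rfl)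
  · change conjHom quadHomeo.symm X0c ∈ Subgroup.closure quadGens
    rw [conjHom_quadHomeo_X0c]
    exact mul_mem (mul_mem hX1c hX0D) (mul_mem (mul_mem (inv_mem hσ) hX0D) hσ)
  · exact hX1c

end TV

/-- **The copy of Thompson's group `F` over `ρ_n` lies in `W_n`:** for every `n ≥ 1`,
the group `W_n = ⟨T_n⟩` contains the copy
`RiSt_F(C_{(ρ_n,1)} ∪ C_{(ρ_n,2)} ∪ C_{(ρ_n,3)} ∪ C_{(ρ_n,4)})` of Thompson's group `F`
supported on the union of the four sheets over `ρ_n`, i.e. the image of `F` under the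
embedding given by the identification of this union with the Cantor set. -/
theorem ristF_le_Wn (n : ℕ) (hn : 1 ≤ n) (f : Cantor ≃ₜ Cantor) (hf : f ∈ ThompsonF) :
    TV.liftRho n f ∈ TV.Wn n := by
  rw [TV.liftRho_eq]
  exact TV.map_closure_quadGens_le n
    (Subgroup.mem_map_of_mem _ (TV.conjHom_quadHomeo_mem_closure_quadGens hf))
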